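/- arXiv:2105.00711 — 2 statements merged into one kernel-verified Lean document; each statement's English description precedes it below -/
import Mathlib

section
/- Let X be a finite set, R a partial order relation on X, and M ⊆ X. If max M = max R, then γ_R(M) is an upper end of R. -/
namespace Erne

variable {α : Type*}

/-- A partial order relation with carrier `X`: a reflexive, antisymmetric,
transitive subset of `X × X`. -/
def IsPor (X : Set α) (R : Set (α × α)) : Prop :=
  R ⊆ X ×ˢ X ∧ (∀ x ∈ X, (x, x) ∈ R) ∧
    (∀ x y, (x, y) ∈ R → (y, x) ∈ R → x = y) ∧
    (∀ x y z, (x, y) ∈ R → (y, z) ∈ R → (x, z) ∈ R)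

/-- The carrier of a p.o.r. (recovered from reflexivity). -/
def carrier (R : Set (α × α)) : Set α := {x | (x, x) ∈ R}

/-- The induced p.o.r. `R|_M = R ∩ (M × M)`. -/
def restrict (R : Set (α × α)) (M : Set α) : Set (α × α) := R ∩ M ×ˢ M

/-- The dual `R^d`. -/
def dual (R : Set (α × α)) : Set (α × α) := {p | (p.2, p.1) ∈ R}

/-- `↑_R M`. -/
def upSet (R : Set (α × α)) (M : Set α) : Set α := {x | ∃ y ∈ M, (y, x) ∈ R}

/-- `↓_R M`. -/
def downSet (R : Set (α × α)) (M : Set α) : Set α := {x | ∃ y ∈ M, (x, y) ∈ R}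

/-- `↑_R x`. -/
def up (R : Set (α × α)) (x : α) : Set α := {z | (x, z) ∈ R}

/-- `↓_R y`. -/
def down (R : Set (α × α)) (y : α) : Set α := {x | (x, y) ∈ R}

/-- `L` is a lower end of `R`. -/
def IsLowerEnd (R : Set (α × α)) (L : Set α) : Prop :=
  ∀ x y, (x, y) ∈ R → y ∈ L → x ∈ L

/-- `U` is an upper end of `R`. -/
def IsUpperEnd (R : Set (α × α)) (U : Set α) : Prop :=
  ∀ x y, (x, y) ∈ R → x ∈ U → y ∈ U

/-- `M` is convex in `R`. -/
def IsConvex (R : Set (α × α)) (M : Set α) : Prop :=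
  ∀ a b x, a ∈ M → b ∈ M → (a, x) ∈ R → (x, b) ∈ R → x ∈ M

/-- The set of maximal points of `R`: those `x` with `↑_R x = {x}`. -/
def maxPts (R : Set (α × α)) : Set α := {x | up R x = {x}}

/-- `max M = max R|_M`. -/
def maxOf (R : Set (α × α)) (M : Set α) : Set α := maxPts (restrict R M)

/-- `γ_R(M) = ⋃_{(m,n) ∈ M×M} (↑_R m) ∩ (↓_R n)`, the convex hull of `M` in `R`. -/
def gamma (R : Set (α × α)) (M : Set α) : Set α :=
  {x | ∃ m ∈ M, ∃ n ∈ M, (m, x) ∈ R ∧ (x, n) ∈ R}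

/-- The antichain (diagonal) `Δ_Y` on `Y`. -/
def diag (Y : Set α) : Set (α × α) := {p | p.1 = p.2 ∧ p.1 ∈ Y}

/-- `𝔘(X,Y)`: p.o.r.'s on `X ∪ Y` in which `Y` is an upper end. -/
def Uset (X Y : Set α) : Set (Set (α × α)) :=
  {R | IsPor (X ∪ Y) R ∧ IsUpperEnd R Y}

/-- `ℭ_Q(X,Y)`: p.o.r.'s on `X ∪ Y` with `R|_Y = Q` convex in `R`. -/
def Cset (Q : Set (α × α)) (X Y : Set α) : Set (Set (α × α)) :=
  {R | IsPor (X ∪ Y) R ∧ restrict R Y = Q ∧ IsConvex R Y}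

/-- `𝔐_Q(X,Y) = 𝔘(X,Y) ∩ ℭ_Q(X,Y)`. -/
def Mset (Q : Set (α × α)) (X Y : Set α) : Set (Set (α × α)) :=
  Uset X Y ∩ Cset Q X Y

/-- `𝔐*_Q(X,Y)`: members of `ℭ_Q(X,Y)` with `max Q = max R`. -/
def MstarSet (Q : Set (α × α)) (X Y : Set α) : Set (Set (α × α)) :=
  {R ∈ Cset Q X Y | maxPts Q = maxPts R}

/-- `ℑ_Q(X,Y)`: p.o.r.'s on `X ∪ Y` with `R|_Y = Q`. -/
def Iset (Q : Set (α × α)) (X Y : Set α) : Set (Set (α × α)) :=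
  {R | IsPor (X ∪ Y) R ∧ restrict R Y = Q}

/-- `𝔑*_Q(X,Y)`: members of `ℑ_Q(X,Y)` with `max Q = max R`. -/
def NstarSet (Q : Set (α × α)) (X Y : Set α) : Set (Set (α × α)) :=
  {R ∈ Iset Q X Y | maxPts Q = maxPts R}

/-- `τ_{X,Y}(R) = (R|_X)^d ∪ ((X×Y) \ R) ∪ (R|_Y)^d`. -/
def tau (X Y : Set α) (R : Set (α × α)) : Set (α × α) :=
  dual (restrict R X) ∪ ((X ×ˢ Y) \ R) ∪ dual (restrict R Y)

/-- `𝒢_Q(M)`: members `G` of `ℑ_Q(M,Y)` with `γ_G(Y) = c(G)`. -/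
def GsetM (Q : Set (α × α)) (Y M : Set α) : Set (Set (α × α)) :=
  {G ∈ Iset Q M Y | gamma G Y = carrier G}

/-- `𝔊_Q(X) = ⋃_{M ⊆ X} 𝒢_Q(M)`. -/
def Gset (Q : Set (α × α)) (X Y : Set α) : Set (Set (α × α)) :=
  {G | ∃ M ⊆ X, G ∈ GsetM Q Y M}

/-- `ℒ(P)`: the lower ends of `P` (subsets of the carrier of `P`). -/
def lowerEnds (P : Set (α × α)) : Set (Set α) :=
  {L | L ⊆ carrier P ∧ IsLowerEnd P L}

/-- `ℋ_Q(Y, ℒ(P))`: mappings `f : Y → ℒ(P)` with `(a,b) ∈ Q → f a ⊆ f b`. -/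
def Hset (Q P : Set (α × α)) (Y : Set α) : Set (↥Y → Set α) :=
  {f | (∀ y, f y ∈ lowerEnds P) ∧
    ∀ a b : ↥Y, ((a : α), (b : α)) ∈ Q → f a ⊆ f b}

/-- `Φ(f) = P ∪ Q ∪ ⋃_{y ∈ Y} (f(y) × {y})` for `f ∈ ℋ_Q(Y, ℒ(P))`. -/
def Phi (Q : Set (α × α)) (Y : Set α) (P : Set (α × α)) (f : ↥Y → Set α) :
    Set (α × α) :=
  P ∪ Q ∪ {p | ∃ h : p.2 ∈ Y, p.1 ∈ f ⟨p.2, h⟩}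

/-- `𝔉_Q(X,Y)`: pairs `(P, f)` with `P ∈ 𝔓(X)` and `f ∈ ℋ_Q(Y, ℒ(P))`;
the first component encodes `S(f) = P`. -/
def Fset (Q : Set (α × α)) (X Y : Set α) :
    Set (Set (α × α) × (↥Y → Set α)) :=
  {pf | IsPor X pf.1 ∧ pf.2 ∈ Hset Q pf.1 Y}

/-- `𝔉*_Q(X,Y)`: those `f ∈ 𝔉_Q(X,Y)` with `X = ⋃_{y ∈ Y} f(y)`. -/
def FstarSet (Q : Set (α × α)) (X Y : Set α) :
    Set (Set (α × α) × (↥Y → Set α)) :=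
  {pf ∈ Fset Q X Y | X = ⋃ y : ↥Y, pf.2 y}

/-- The transitive hull of `S`: the smallest transitive relation containing `S`. -/
def transHull (S : Set (α × α)) : Set (α × α) :=
  {p | Relation.TransGen (fun a b => (a, b) ∈ S) p.1 p.2}

/-!
If `x ∈ γ_R(M)` lies between `m, n ∈ M` and `(x, y) ∈ R`, finiteness provides a maximal `z`
above `y`. Since `max R = max M`, this `z` lies in `M`, so `y` lies between `m` and `z`.
-/

theorem mem_maxPts_iff {R : Set (α × α)} {x : α} :
    x ∈ maxPts R ↔ (x, x) ∈ R ∧ ∀ z, (x, z) ∈ R → z = x := by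
  simp only [maxPts, up, Set.eq_singleton_iff_unique_mem]
  rfl

theorem mem_of_mem_maxOf {R : Set (α × α)} {M : Set α} {x : α} (hx : x ∈ maxOf R M) : x ∈ M :=
  (mem_maxPts_iff.1 hx).1.2.1

theorem IsPor.exists_maxPts_above {X : Set α} {R : Set (α × α)} (hR : IsPor X R)
    (hX : X.Finite) {y : α} (hy : y ∈ X) : ∃ z, (y, z) ∈ R ∧ z ∈ maxPts R := by
  obtain ⟨hsub, hrefl, hanti, htrans⟩ := hR
  have hup : (up R y).Finite := hX.subset fun z hz => (hsub hz).2
  -- `z ↦ ↓_R z` embeds `R` into `(Set α, ⊆)`, where a finite nonempty family has a maximal member.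
  obtain ⟨z, hyz, hmax⟩ := hup.exists_maximalFor (down R) _ ⟨y, hrefl y hy⟩
  refine ⟨z, hyz, mem_maxPts_iff.2 ⟨hrefl z (hsub hyz).2, fun c hzc => ?_⟩⟩
  have hdown : down R z ⊆ down R c := fun w hwz => htrans _ _ _ hwz hzc
  exact hanti _ _ (hmax (htrans _ _ _ hyz hzc) hdown (hrefl c (hsub hzc).2)) hzc

theorem stmt4_general {α : Type*} (X : Set α) (hX : X.Finite) (R : Set (α × α))
    (hR : IsPor X R) (M : Set α) (h : maxOf R M = maxPts R) :
    IsUpperEnd R (gamma R M) := by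
  rintro x y hxy ⟨m, hm, n, -, hmx, -⟩
  obtain ⟨z, hyz, hz⟩ := hR.exists_maxPts_above hX (hR.1 hxy).2
  exact ⟨m, hm, z, mem_of_mem_maxOf (h ▸ hz), hR.2.2.2 _ _ _ hmx hxy, hyz⟩

/-- If `max M = max R`, then `γ_R(M)` is an upper end of `R`. -/
theorem stmt4 {α : Type*} (X : Set α) (hX : X.Finite) (R : Set (α × α))
    (hR : IsPor X R) (M : Set α) (hM : M ⊆ X) (h : maxOf R M = maxPts R) :
    IsUpperEnd R (gamma R M) :=
  stmt4_general X hX R hR M h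

end Erne
end

section
/- Let X and Z be disjoint finite sets, Q ∈ 𝔓(Z), let y be a point not contained in X ∪ Z, and set W = X ∪ Z. The mapping σ : 𝔐*_{Q+A_y}(X, Z∪{y}) → ℭ_{Q^d}(X, Z) defined by σ(R) = τ_{W ∩ ↓_R y, W \ ↓_R y}(R|_W) is a well-defined bijection. -/
/-!
For `R` in the domain, `y` is a maximal point of `R`, so `R` is `R|_W` with `y` adjoined above
the lower end `D = W ∩ ↓_R y`, and the complementary upper end `U = W \ ↓_R y` contains `Z`.
For any splitting of the carrier into `D` and `U`, `τ_{D,U}` yields a partial order relation in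
which `U` is an upper end and `D` a lower end, and it is an involution when `U` is an upper end of
the original relation. Since `max R = max Q ∪ {y}`, every point of `U` lies below a point of `max Q`,
so in `S = σ(R)` the set `U` is the up-set of the antichain `max Q`, which is the set of minimal
points of `U`. This recovers `D`, `U` and then `R` from `S`, and the same recipe applied to an arbitrary
`S ∈ ℭ_{Q^d}(X, Z)` produces a preimage.
-/


namespace Erne

variable {α : Type*}

section PartialOrderRelations

variable {C M : Set α} {R : Set (α × α)} {x z : α}

theorem IsPor.restrict (h : IsPor C R) (hM : M ⊆ C) : IsPor M (restrict R M) := by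
  obtain ⟨-, hrefl, hanti, htrans⟩ := h
  refine ⟨Set.inter_subset_right, fun x hx => ⟨hrefl x (hM hx), hx, hx⟩,
    fun a b hab hba => hanti a b hab.1 hba.1, ?_⟩
  rintro a b c ⟨hab, ha, -⟩ ⟨hbc, -, hc⟩
  exact ⟨htrans _ _ _ hab hbc, ha, hc⟩

theorem restrict_restrict (h : M ⊆ C) : restrict (restrict R C) M = restrict R M := by
  simp only [restrict, Set.inter_assoc, Set.prod_inter_prod, Set.inter_eq_right.2 h]

theorem dual_dual : dual (dual R) = R := rfl

theorem IsConvex.restrict_inter (h : IsConvex R M) : IsConvex (restrict R C) (M ∩ C) :=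
  fun a b x ha hb hax hxb => ⟨h a b x ha.1 hb.1 hax.1 hxb.1, hax.2.2⟩

theorem mem_maxPts : x ∈ maxPts R ↔ (x, x) ∈ R ∧ ∀ z, (x, z) ∈ R → z = x :=
  Set.eq_singleton_iff_unique_mem

theorem maxPts_subset (h : R ⊆ C ×ˢ C) : maxPts R ⊆ C :=
  fun _ hx => (h (mem_maxPts.1 hx).1).1

theorem exists_mem_maxPts (hC : C.Finite) (hR : IsPor C R) (hx : x ∈ C) :
    ∃ m ∈ maxPts R, (x, m) ∈ R := by
  obtain ⟨hsub, hrefl, hanti, htrans⟩ := hR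
  have hfin : (up R x).Finite := hC.subset fun _ hz => (hsub hz).2
  -- a point whose up-set is minimal for inclusion is maximal
  obtain ⟨m, hxm, hmin⟩ := hfin.exists_minimalFor (up R) _ ⟨x, hrefl x hx⟩
  refine ⟨m, mem_maxPts.2 ⟨hrefl m (hsub hxm).2, fun z hmz => ?_⟩, hxm⟩
  have hzm : (z, m) ∈ R :=
    hmin (htrans _ _ _ hxm hmz) (fun w hw => htrans _ _ _ hmz hw) (hrefl m (hsub hxm).2)
  exact hanti z m hzm hmz

end PartialOrderRelations

section Tau

variable {C D U M : Set α} {S : Set (α × α)} {a b : α}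

theorem mem_tau :
    (a, b) ∈ tau D U S ↔
      ((b, a) ∈ S ∧ b ∈ D ∧ a ∈ D) ∨ ((a ∈ D ∧ b ∈ U) ∧ (a, b) ∉ S) ∨
        ((b, a) ∈ S ∧ b ∈ U ∧ a ∈ U) := by
  simp only [tau, dual, restrict, Set.mem_union, Set.mem_ofPred_eq, Set.mem_inter_iff,
    Set.mem_prod, Set.mem_sdiff]
  tauto

theorem mem_tau_of_mem_right (hDU : Disjoint D U) (ha : a ∈ U) :
    (a, b) ∈ tau D U S ↔ (b, a) ∈ S ∧ b ∈ U := by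
  have ha' : a ∉ D := Set.disjoint_right.1 hDU ha
  rw [mem_tau]
  tauto

theorem isUpperEnd_tau (hDU : Disjoint D U) : IsUpperEnd (tau D U S) U :=
  fun _ _ hab ha => ((mem_tau_of_mem_right hDU ha).1 hab).2

theorem isLowerEnd_tau (hDU : Disjoint D U) : IsLowerEnd (tau D U S) D := by
  intro a b hab hb
  have hb' : b ∉ U := Set.disjoint_left.1 hDU hb
  rcases mem_tau.1 hab with h | h | h
  exacts [h.2.2, h.1.1, absurd h.2.1 hb']

theorem IsPor.tau (hDU : Disjoint D U) (hC : D ∪ U = C) (hS : IsPor C S) :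
    IsPor C (tau D U S) := by
  subst hC
  obtain ⟨hsub, hrefl, hanti, htrans⟩ := hS
  have hDU' : ∀ x, x ∈ D → x ∈ U → False := fun _ hx => Set.disjoint_left.1 hDU hx
  refine ⟨?_, ?_, ?_, ?_⟩
  · rintro ⟨a, b⟩ hab
    rcases mem_tau.1 hab with h | h | h
    exacts [⟨.inl h.2.2, .inl h.2.1⟩, ⟨.inl h.1.1, .inr h.1.2⟩, ⟨.inr h.2.2, .inr h.2.1⟩]
  · rintro x (hx | hx)
    · exact mem_tau.2 (.inl ⟨hrefl x (.inl hx), hx, hx⟩)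
    · exact mem_tau.2 (.inr (.inr ⟨hrefl x (.inr hx), hx, hx⟩))
  · intro a b hab hba
    rw [mem_tau] at hab hba
    rcases hab with h | h | h <;> rcases hba with h' | h' | h'
    all_goals first
      | exact hanti a b h'.1 h.1
      | exact (hDU' a (by tauto) (by tauto)).elim
  · intro a b c hab hbc
    rw [mem_tau] at hab hbc ⊢
    rcases hab with h | h | h <;> rcases hbc with h' | h' | h'
    all_goals first
      | exact .inl ⟨htrans _ _ _ h'.1 h.1, h'.2.1, h.2.2⟩
      | exact .inr (.inr ⟨htrans _ _ _ h'.1 h.1, h'.2.1, h.2.2⟩)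
      | exact .inr (.inl ⟨⟨h.2.2, h'.1.2⟩, fun hac => h'.2 (htrans _ _ _ h.1 hac)⟩)
      | exact .inr (.inl ⟨⟨h.1.1, h'.2.1⟩, fun hac => h.2 (htrans _ _ _ hac h'.1)⟩)
      | exact (hDU' b (by tauto) (by tauto)).elim

theorem tau_tau (hDU : Disjoint D U) (hC : D ∪ U = C) (hS : IsPor C S) (hU : IsUpperEnd S U) :
    tau D U (tau D U S) = S := by
  subst hC
  have hDU' : ∀ x, x ∈ D → x ∈ U → False := fun _ hx => Set.disjoint_left.1 hDU hx
  ext ⟨a, b⟩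
  simp only [mem_tau]
  -- `U` being an upper end rules out pairs of `S` from `U` to `D`, which `τ ∘ τ` would lose.
  by_cases hab : (a, b) ∈ S
  · have hmem := hS.1 hab
    have hUab : a ∈ U → b ∈ U := hU a b hab
    grind
  · grind

theorem restrict_tau_of_subset (hDU : Disjoint D U) (hM : M ⊆ U) :
    restrict (tau D U S) M = dual (restrict S M) := by
  ext ⟨a, b⟩
  constructor
  · rintro ⟨hab, ha, hb⟩
    exact ⟨((mem_tau_of_mem_right hDU (hM ha)).1 hab).1, hb, ha⟩
  · rintro ⟨hba, hb, ha⟩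
    exact ⟨(mem_tau_of_mem_right hDU (hM ha)).2 ⟨hba, hM hb⟩, ha, hb⟩

theorem IsConvex.tau (hDU : Disjoint D U) (hM : M ⊆ U) (h : IsConvex S M) :
    IsConvex (tau D U S) M := by
  intro a b x ha hb hax hxb
  obtain ⟨hxa, hx⟩ := (mem_tau_of_mem_right hDU (hM ha)).1 hax
  exact h b a x hb ha ((mem_tau_of_mem_right hDU hx).1 hxb).1 hxa

theorem maxPts_restrict_of_isUpperEnd {R : Set (α × α)} (hU : IsUpperEnd R U) :
    maxPts (restrict R U) = maxPts R ∩ U := by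
  ext x
  simp only [mem_maxPts, Set.mem_inter_iff]
  constructor
  · rintro ⟨⟨hxx, hx, -⟩, hmax⟩
    exact ⟨⟨hxx, fun z hxz => hmax z ⟨hxz, hx, hU x z hxz hx⟩⟩, hx⟩
  · rintro ⟨⟨hxx, hmax⟩, hx⟩
    exact ⟨⟨hxx, hx, hx⟩, fun z hxz => hmax z hxz.1⟩

theorem maxPts_tau_sdiff (hDU : Disjoint D U) (hC : D ∪ U = C) (hS : IsPor C S) :
    maxPts (tau D U S) \ D = maxPts (dual (restrict S U)) := by
  rw [← restrict_tau_of_subset hDU subset_rfl, maxPts_restrict_of_isUpperEnd (isUpperEnd_tau hDU)]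
  ext x
  have hcarrier : maxPts (tau D U S) ⊆ D ∪ U := hC ▸ maxPts_subset (hS.tau hDU hC).1
  constructor
  · rintro ⟨hx, hxD⟩
    exact ⟨hx, (hcarrier hx).resolve_left hxD⟩
  · rintro ⟨hx, hxU⟩
    exact ⟨hx, fun hxD => Set.disjoint_left.1 hDU hxD hxU⟩

end Tau

section UpperEnds

variable {A C M : Set α} {R S : Set (α × α)} {y : α}

theorem isUpperEnd_inter_upSet (hS : IsPor C S) : IsUpperEnd S (C ∩ upSet S A) := by
  rintro a b hab ⟨-, m, hm, hma⟩
  exact ⟨(hS.1 hab).2, m, hm, hS.2.2.2 _ _ _ hma hab⟩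

theorem isUpperEnd_sdiff_down (hR : IsPor C R) : IsUpperEnd (restrict R M) (M \ down R y) := by
  rintro a b ⟨hab, -, hb⟩ ⟨-, ha⟩
  exact ⟨hb, fun hby => ha (hR.2.2.2 _ _ _ hab hby)⟩

theorem maxPts_dual_restrict_inter_upSet (hS : IsPor C S) (hA : A ⊆ C)
    (hanti : ∀ a ∈ A, ∀ b ∈ A, (a, b) ∈ S → a = b) :
    maxPts (dual (restrict S (C ∩ upSet S A))) = A := by
  obtain ⟨-, hrefl, hanti', htrans⟩ := hS
  have hAU : ∀ a ∈ A, a ∈ C ∩ upSet S A := fun a ha => ⟨hA ha, a, ha, hrefl a (hA ha)⟩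
  ext x
  rw [mem_maxPts]
  constructor
  · rintro ⟨⟨-, -, hxU⟩, hmax⟩
    obtain ⟨-, a, ha, hax⟩ := id hxU
    rwa [← hmax a ⟨hax, hAU a ha, hxU⟩]
  · intro hx
    refine ⟨⟨hrefl x (hA hx), hAU x hx, hAU x hx⟩, ?_⟩
    rintro z ⟨hzx, ⟨-, a, ha, haz⟩, -⟩
    obtain rfl : a = x := hanti a ha x hx (htrans _ _ _ haz hzx)
    exact hanti' _ _ hzx haz

end UpperEnds

section AdjoinAbove

variable {C D M : Set α} {S R : Set (α × α)} {y a b : α}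

def adjoinAbove (S : Set (α × α)) (D : Set α) (y : α) : Set (α × α) :=
  S ∪ (D ∪ {y}) ×ˢ {y}

theorem mem_adjoinAbove :
    (a, b) ∈ adjoinAbove S D y ↔ (a, b) ∈ S ∨ (a ∈ D ∨ a = y) ∧ b = y :=
  Iff.rfl

theorem adjoinAbove_empty : adjoinAbove S ∅ y = S ∪ {(y, y)} := by
  rw [adjoinAbove, Set.empty_union, Set.singleton_prod_singleton]

theorem IsPor.adjoinAbove (hS : IsPor C S) (hD : D ⊆ C) (hDS : IsLowerEnd S D) (hy : y ∉ C) :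
    IsPor (C ∪ {y}) (adjoinAbove S D y) := by
  obtain ⟨hsub, hrefl, hanti, htrans⟩ := hS
  have hne : ∀ {a b}, (a, b) ∈ S → a ≠ y ∧ b ≠ y := fun h =>
    ⟨fun e => hy (e ▸ (hsub h).1), fun e => hy (e ▸ (hsub h).2)⟩
  refine ⟨?_, ?_, ?_, ?_⟩
  · rintro ⟨a, b⟩ h
    rw [mem_adjoinAbove] at h
    rcases h with h | ⟨ha, rfl⟩
    · exact ⟨.inl (hsub h).1, .inl (hsub h).2⟩
    · exact ⟨ha.imp_left (hD ·), .inr rfl⟩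
  · rintro x (hx | rfl)
    · exact .inl (hrefl x hx)
    · exact .inr ⟨.inr rfl, rfl⟩
  · simp only [mem_adjoinAbove]
    rintro a b (h | ⟨-, rfl⟩) (h' | ⟨-, rfl⟩)
    · exact hanti a b h h'
    · exact ((hne h).1 rfl).elim
    · exact ((hne h').1 rfl).elim
    · rfl
  · simp only [mem_adjoinAbove]
    rintro a b c (h | ⟨ha, rfl⟩) (h' | ⟨hb, rfl⟩)
    · exact .inl (htrans _ _ _ h h')
    · exact .inr ⟨.inl (hDS a _ h (hb.resolve_right (hne h).2)), rfl⟩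
    · exact ((hne h').1 rfl).elim
    · exact .inr ⟨ha, rfl⟩

theorem down_adjoinAbove (hS : S ⊆ C ×ˢ C) (hy : y ∉ C) :
    down (adjoinAbove S D y) y = D ∪ {y} := by
  ext x
  constructor
  · rintro (h | ⟨hx, -⟩)
    exacts [absurd (hS h).2 hy, hx]
  · exact fun hx => .inr ⟨hx, rfl⟩

theorem restrict_adjoinAbove (hS : S ⊆ C ×ˢ C) (hy : y ∉ C) :
    restrict (adjoinAbove S D y) C = S := by
  ext ⟨a, b⟩
  constructor
  · rintro ⟨h | ⟨-, rfl⟩, -, hb⟩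
    exacts [h, absurd hb hy]
  · exact fun h => ⟨.inl h, hS h⟩

theorem restrict_adjoinAbove_union_singleton (hS : S ⊆ C ×ˢ C) (hy : y ∉ C)
    (hMD : Disjoint M D) :
    restrict (adjoinAbove S D y) (M ∪ {y}) = restrict S M ∪ {(y, y)} := by
  ext ⟨a, b⟩
  have hne : (a, b) ∈ S → a ≠ y ∧ b ≠ y := fun h =>
    ⟨fun e => hy (e ▸ (hS h).1), fun e => hy (e ▸ (hS h).2)⟩
  have hMD' : a ∈ M → a ∉ D := fun ha => Set.disjoint_left.1 hMD ha
  simp only [restrict, Set.mem_inter_iff, Set.mem_prod, mem_adjoinAbove, Set.mem_union,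
    Set.mem_singleton_iff, Prod.mk.injEq]
  tauto

theorem IsConvex.adjoinAbove (hS : S ⊆ C ×ˢ C) (hy : y ∉ C) (hDS : IsLowerEnd S D)
    (hMD : Disjoint M D) (h : IsConvex S M) : IsConvex (adjoinAbove S D y) (M ∪ {y}) := by
  rintro a b x ha hb (hax | ⟨-, rfl⟩) hxb
  · have hay : a ∈ M := ha.resolve_right fun e => hy (e ▸ (hS hax).1)
    rcases hxb with hxb | ⟨hxD | rfl, -⟩
    · exact .inl (h a b x hay (hb.resolve_right fun e => hy (e ▸ (hS hxb).2)) hax hxb)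
    · exact (Set.disjoint_left.1 hMD hay (hDS a x hax hxD)).elim
    · exact (hy (hS hax).2).elim
  · exact .inr rfl

theorem maxPts_adjoinAbove (hS : S ⊆ C ×ˢ C) (hy : y ∉ C) :
    maxPts (adjoinAbove S D y) = maxPts S \ D ∪ {y} := by
  ext x
  simp only [Set.mem_union, Set.mem_singleton_iff, Set.mem_sdiff, mem_maxPts, mem_adjoinAbove]
  rcases eq_or_ne x y with rfl | hxy
  · refine iff_of_true ⟨.inr ⟨.inr rfl, rfl⟩, ?_⟩ (.inr rfl)
    rintro z (h | ⟨-, rfl⟩)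
    exacts [absurd (hS h).1 hy, rfl]
  · simp only [hxy, and_false, or_false]
    constructor
    · rintro ⟨hxx, hmax⟩
      exact ⟨⟨hxx, fun z hz => hmax z (.inl hz)⟩,
        fun hxD => hxy (hmax y (.inr ⟨hxD, rfl⟩)).symm⟩
    · rintro ⟨⟨hxx, hmax⟩, hxD⟩
      refine ⟨hxx, fun z => ?_⟩
      rintro (h | ⟨hx, -⟩)
      exacts [hmax z h, absurd hx hxD]

theorem maxPts_union_singleton (hS : S ⊆ C ×ˢ C) (hy : y ∉ C) :
    maxPts (S ∪ {(y, y)}) = maxPts S ∪ {y} := by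
  rw [← adjoinAbove_empty, maxPts_adjoinAbove hS hy, Set.sdiff_empty]

theorem eq_adjoinAbove (hR : IsPor (C ∪ {y}) R) (hmax : y ∈ maxPts R) :
    R = adjoinAbove (restrict R C) (C ∩ down R y) y := by
  obtain ⟨hsub, hrefl, -, -⟩ := hR
  obtain ⟨hyy, hymax⟩ := mem_maxPts.1 hmax
  ext ⟨a, b⟩
  rw [mem_adjoinAbove]
  constructor
  · intro h
    obtain ⟨ha, hb⟩ := hsub h
    rcases eq_or_ne b y with rfl | hby
    · exact .inr ⟨ha.imp (fun ha => ⟨ha, h⟩) id, rfl⟩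
    · have hay : a ≠ y := fun hay => hby (hymax b (hay ▸ h))
      exact .inl ⟨h, ha.resolve_right hay, hb.resolve_right hby⟩
  · rintro (h | ⟨⟨-, h⟩ | rfl, rfl⟩)
    exacts [h.1, h, hyy]

end AdjoinAbove

section Sigma

variable {X Z : Set α} {Q R S : Set (α × α)} {y : α}

def sigma (W : Set α) (y : α) (R : Set (α × α)) : Set (α × α) :=
  tau (W ∩ down R y) (W \ down R y) (restrict R W)

-- `σ(R)` reverses `R` on the points not below `y`, and their minimal points become `max Q`.
def sigmaInv (Q : Set (α × α)) (W : Set α) (y : α) (S : Set (α × α)) : Set (α × α) :=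
  adjoinAbove (tau (W \ upSet S (maxPts Q)) (W ∩ upSet S (maxPts Q)) S)
    (W \ upSet S (maxPts Q)) y

theorem isPor_of_mem_MstarSet (hR : R ∈ MstarSet (Q ∪ {(y, y)}) X (Z ∪ {y})) :
    IsPor (X ∪ Z ∪ {y}) R :=
  Set.union_assoc X Z {y} ▸ hR.1.1

theorem maxPts_eq_of_mem_MstarSet (hQ : Q ⊆ Z ×ˢ Z) (hy : y ∉ Z)
    (hR : R ∈ MstarSet (Q ∪ {(y, y)}) X (Z ∪ {y})) : maxPts R = maxPts Q ∪ {y} := by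
  rw [← hR.2, maxPts_union_singleton hQ hy]

theorem subset_sdiff_down_of_mem_MstarSet (hQ : Q ⊆ Z ×ˢ Z) (hy : y ∉ Z)
    (hR : R ∈ MstarSet (Q ∪ {(y, y)}) X (Z ∪ {y})) : Z ⊆ (X ∪ Z) \ down R y := by
  refine fun z hz => ⟨.inr hz, fun hzy => ?_⟩
  have : (z, y) ∈ Q ∪ {(y, y)} := hR.1.2.1 ▸ ⟨hzy, .inl hz, .inr rfl⟩
  rcases this with h | h
  · exact hy (hQ h).2
  · exact hy ((Prod.mk.inj h).1 ▸ hz)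

theorem restrict_eq_of_mem_MstarSet (hQ : Q ⊆ Z ×ˢ Z) (hy : y ∉ Z)
    (hR : R ∈ MstarSet (Q ∪ {(y, y)}) X (Z ∪ {y})) : restrict R Z = Q := by
  rw [← restrict_restrict Set.subset_union_left, hR.1.2.1, ← adjoinAbove_empty,
    restrict_adjoinAbove hQ hy]

theorem sigma_mem_Cset (hQ : Q ⊆ Z ×ˢ Z) (hy : y ∉ X ∪ Z)
    (hR : R ∈ MstarSet (Q ∪ {(y, y)}) X (Z ∪ {y})) : sigma (X ∪ Z) y R ∈ Cset (dual Q) X Z := by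
  have hyZ : y ∉ Z := fun h => hy (.inr h)
  have hZU := subset_sdiff_down_of_mem_MstarSet hQ hyZ hR
  have hDU : Disjoint ((X ∪ Z) ∩ down R y) ((X ∪ Z) \ down R y) := Set.disjoint_sdiff_inter.symm
  refine ⟨?_, ?_, ?_⟩
  · exact ((isPor_of_mem_MstarSet hR).restrict Set.subset_union_left).tau hDU
      (Set.inter_union_sdiff _ _)
  · rw [sigma, restrict_tau_of_subset hDU hZU, restrict_restrict Set.subset_union_right,
      restrict_eq_of_mem_MstarSet hQ hyZ hR]
  · have hZ : (Z ∪ {y}) ∩ (X ∪ Z) = Z := Set.ext fun x =>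
      ⟨fun ⟨h, hW⟩ => h.resolve_right fun e => hy (e ▸ hW), fun h => ⟨.inl h, .inr h⟩⟩
    exact (hZ ▸ hR.1.2.2.restrict_inter).tau hDU hZU

-- Each point of `X ∪ Z` not below `y` lies below a maximal point of `R` other than `y`.
theorem inter_upSet_sigma (hW : (X ∪ Z).Finite) (hQ : Q ⊆ Z ×ˢ Z) (hy : y ∉ X ∪ Z)
    (hR : R ∈ MstarSet (Q ∪ {(y, y)}) X (Z ∪ {y})) :
    (X ∪ Z) ∩ upSet (sigma (X ∪ Z) y R) (maxPts Q) = (X ∪ Z) \ down R y := by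
  have hyZ : y ∉ Z := fun h => hy (.inr h)
  have hZU := subset_sdiff_down_of_mem_MstarSet hQ hyZ hR
  have hmaxQ : maxPts Q ⊆ Z := maxPts_subset hQ
  have hDU : Disjoint ((X ∪ Z) ∩ down R y) ((X ∪ Z) \ down R y) := Set.disjoint_sdiff_inter.symm
  apply Set.Subset.antisymm
  · rintro x ⟨-, m, hm, hmx⟩
    exact isUpperEnd_tau hDU m x hmx (hZU (hmaxQ hm))
  · intro x hx
    obtain ⟨m, hm, hxm⟩ := exists_mem_maxPts (hW.union (Set.finite_singleton y))
      (isPor_of_mem_MstarSet hR) (.inl hx.1)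
    rcases maxPts_eq_of_mem_MstarSet hQ hyZ hR ▸ hm with hm | rfl
    · refine ⟨hx.1, m, hm, (mem_tau_of_mem_right hDU (hZU (hmaxQ hm))).2 ⟨?_, hx⟩⟩
      exact ⟨hxm, hx.1, .inr (hmaxQ hm)⟩
    · exact (hx.2 hxm).elim

theorem sigmaInv_sigma (hW : (X ∪ Z).Finite) (hQ : Q ⊆ Z ×ˢ Z) (hy : y ∉ X ∪ Z)
    (hR : R ∈ MstarSet (Q ∪ {(y, y)}) X (Z ∪ {y})) :
    sigmaInv Q (X ∪ Z) y (sigma (X ∪ Z) y R) = R := by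
  have hyZ : y ∉ Z := fun h => hy (.inr h)
  have hpor := isPor_of_mem_MstarSet hR
  have hU := inter_upSet_sigma hW hQ hy hR
  have hD : (X ∪ Z) \ upSet (sigma (X ∪ Z) y R) (maxPts Q) = (X ∪ Z) ∩ down R y := by
    rw [← Set.sdiff_self_inter, hU, Set.sdiff_sdiff_right_self]
  have hymax : y ∈ maxPts R := maxPts_eq_of_mem_MstarSet hQ hyZ hR ▸ .inr rfl
  rw [sigmaInv, hD, hU, sigma, tau_tau Set.disjoint_sdiff_inter.symm (Set.inter_union_sdiff _ _)
    (hpor.restrict Set.subset_union_left) (isUpperEnd_sdiff_down hpor),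
    ← eq_adjoinAbove hpor hymax]

theorem subset_inter_upSet_of_mem_Cset (hZ : Z.Finite) (hQ : IsPor Z Q)
    (hS : S ∈ Cset (dual Q) X Z) : Z ⊆ (X ∪ Z) ∩ upSet S (maxPts Q) := by
  intro z hz
  obtain ⟨m, hm, hzm⟩ := exists_mem_maxPts hZ hQ hz
  have hmz : (m, z) ∈ restrict S Z := hS.2.1 ▸ hzm
  exact ⟨.inr hz, m, hm, hmz.1⟩

theorem eq_of_mem_maxPts_of_mem_Cset (hQ : Q ⊆ Z ×ˢ Z) (hS : S ∈ Cset (dual Q) X Z) :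
    ∀ a ∈ maxPts Q, ∀ b ∈ maxPts Q, (a, b) ∈ S → a = b := by
  intro a ha b hb hab
  have hba : (a, b) ∈ dual Q := hS.2.1 ▸ ⟨hab, maxPts_subset hQ ha, maxPts_subset hQ hb⟩
  exact (mem_maxPts.1 hb).2 a hba

theorem sigmaInv_mem_MstarSet (hZ : Z.Finite) (hQ : IsPor Z Q) (hy : y ∉ X ∪ Z)
    (hS : S ∈ Cset (dual Q) X Z) :
    sigmaInv Q (X ∪ Z) y S ∈ MstarSet (Q ∪ {(y, y)}) X (Z ∪ {y}) := by
  have hyZ : y ∉ Z := fun h => hy (.inr h)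
  have hZU := subset_inter_upSet_of_mem_Cset hZ hQ hS
  have hanti := eq_of_mem_maxPts_of_mem_Cset hQ.1 hS
  obtain ⟨hpor, hres, hconv⟩ := hS
  have hDU : Disjoint ((X ∪ Z) \ upSet S (maxPts Q)) ((X ∪ Z) ∩ upSet S (maxPts Q)) :=
    Set.disjoint_sdiff_inter
  have hT := hpor.tau hDU (Set.sdiff_union_inter _ _)
  have hZD := Set.disjoint_of_subset_left hZU hDU.symm
  refine ⟨⟨?_, ?_, ?_⟩, ?_⟩
  · rw [← Set.union_assoc]
    exact hT.adjoinAbove Set.sdiff_subset (isLowerEnd_tau hDU) hy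
  · rw [sigmaInv, restrict_adjoinAbove_union_singleton hT.1 hy hZD,
      restrict_tau_of_subset hDU hZU, hres, dual_dual]
  · exact (hconv.tau hDU hZU).adjoinAbove hT.1 hy (isLowerEnd_tau hDU) hZD
  · rw [maxPts_union_singleton hQ.1 hyZ, sigmaInv, maxPts_adjoinAbove hT.1 hy,
      maxPts_tau_sdiff hDU (Set.sdiff_union_inter _ _) hpor,
      maxPts_dual_restrict_inter_upSet hpor ((maxPts_subset hQ.1).trans Set.subset_union_right)
        hanti]

theorem sigma_sigmaInv (hy : y ∉ X ∪ Z) (hS : S ∈ Cset (dual Q) X Z) : sigma (X ∪ Z) y (sigmaInv Q (X ∪ Z) y S) = S := by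
  have hpor := hS.1
  have hDU : Disjoint ((X ∪ Z) \ upSet S (maxPts Q)) ((X ∪ Z) ∩ upSet S (maxPts Q)) :=
    Set.disjoint_sdiff_inter
  have hT := hpor.tau hDU (Set.sdiff_union_inter _ _)
  have hD : (X ∪ Z) ∩ ((X ∪ Z) \ upSet S (maxPts Q) ∪ {y}) = (X ∪ Z) \ upSet S (maxPts Q) := by
    rw [Set.inter_union_distrib_left, Set.inter_eq_right.2 Set.sdiff_subset,
      Set.inter_singleton_eq_empty.2 hy, Set.union_empty]
  have hU : (X ∪ Z) \ ((X ∪ Z) \ upSet S (maxPts Q) ∪ {y}) = (X ∪ Z) ∩ upSet S (maxPts Q) := by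
    rw [← Set.sdiff_sdiff, Set.sdiff_singleton_eq_self fun h => hy h.1,
      Set.sdiff_sdiff_right_self]
  rw [sigma, sigmaInv, down_adjoinAbove hT.1 hy, hD, hU, restrict_adjoinAbove hT.1 hy,
    tau_tau hDU (Set.sdiff_union_inter _ _) hpor (isUpperEnd_inter_upSet hpor)]

end Sigma

theorem stmt11_general {α : Type*} (X Z : Set α) (hX : X.Finite) (hZ : Z.Finite)
    (Q : Set (α × α)) (hQ : IsPor Z Q)
    (y : α) (hy : y ∉ X ∪ Z) :
    Set.BijOn
      (fun R => tau ((X ∪ Z) ∩ down R y) ((X ∪ Z) \ down R y)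
        (restrict R (X ∪ Z)))
      (MstarSet (Q ∪ {(y, y)}) X (Z ∪ {y})) (Cset (dual Q) X Z) :=
  Set.InvOn.bijOn (f' := sigmaInv Q (X ∪ Z) y)
    ⟨fun _ hR => sigmaInv_sigma (hX.union hZ) hQ.1 hy hR,
      fun _ hS => sigma_sigmaInv hy hS⟩
    (fun _ hR => sigma_mem_Cset hQ.1 hy hR) (fun _ hS => sigmaInv_mem_MstarSet hZ hQ hy hS)

/-- With `W = X ∪ Z`, the mapping
`σ : 𝔐*_{Q+A_y}(X, Z ∪ {y}) → ℭ_{Q^d}(X, Z)`,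
`σ(R) = τ_{W ∩ ↓_R y, W \ ↓_R y}(R|_W)`, is a well-defined bijection. -/
theorem stmt11 {α : Type*} (X Z : Set α) (hX : X.Finite) (hZ : Z.Finite)
    (hXZ : Disjoint X Z) (Q : Set (α × α)) (hQ : IsPor Z Q)
    (y : α) (hy : y ∉ X ∪ Z) :
    Set.BijOn
      (fun R => tau ((X ∪ Z) ∩ down R y) ((X ∪ Z) \ down R y)
        (restrict R (X ∪ Z)))
      (MstarSet (Q ∪ {(y, y)}) X (Z ∪ {y})) (Cset (dual Q) X Z) :=
  stmt11_general X Z hX hZ Q hQ y hy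

end Erne
end
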